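/- Let C be the 4×4 complex matrix with rows (0, 1/2, −1/5, 0), (0, 0, 1/2, 1/5), (0, 0, 0, 1/2), (0, 0, 0, 0), and set D = I − C*C. Then: (i) tr(C²C*C²C*) = 1/200 (so C is not rotationally invariant); and (ii) for all α, s, t ∈ ℂ and all θ ∈ ℝ, det( αI + s(e^{−iθ}C + e^{iθ}C*) + tD ) = (1/40000)·( 40000α⁴ + 126800α³t − 33200α²s² + 148764α²t² − 54672αs²t + 76503αt³ + 3364s⁴ − 22097s²t² + 14539t⁴ ); in particular this determinant is independent of θ, so C has defect-pencil Circularity. -/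

import Mathlib

open Matrix Complex

/-- The matrix of Example 4.1 (tower counterexample). -/
noncomputable def Cex : Matrix (Fin 4) (Fin 4) ℂ :=
  !![0, 1/2, -1/5, 0;
     0, 0, 1/2, 1/5;
     0, 0, 0, 1/2;
     0, 0, 0, 0]

/-- `H_M(θ) = (1/2)(e^{-iθ} M + e^{iθ} Mᴴ)`. -/
noncomputable def Hmat {ι : Type*} [Fintype ι] [DecidableEq ι]
    (M : Matrix ι ι ℂ) (θ : ℝ) : Matrix ι ι ℂ :=
  (1 / 2 : ℂ) • (Complex.exp (-(θ : ℂ) * Complex.I) • M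
    + Complex.exp ((θ : ℂ) * Complex.I) • Mᴴ)

lemma CexH : Cexᴴ = !![0,0,0,0; 1/2,0,0,0; -1/5,1/2,0,0; 0,1/5,1/2,0] := by
  ext i j
  fin_cases i <;> fin_cases j <;>
    simp [Cex, Matrix.conjTranspose_apply, Matrix.vecHead, Matrix.vecTail]

lemma CtC : Cexᴴ * Cex
    = !![(0:ℂ),0,0,0; 0,1/4,-1/10,0; 0,-1/10,29/100,1/10; 0,0,1/10,29/100] := by
  rw [CexH]
  ext i j
  fin_cases i <;> fin_cases j <;>
    simp [Cex, Matrix.mul_apply, Fin.sum_univ_four, Matrix.vecHead, Matrix.vecTail] <;> norm_num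

lemma traceW : Matrix.trace (Cex ^ 2 * Cexᴴ * Cex ^ 2 * Cexᴴ) = 1 / 200 := by
  rw [CexH]
  simp [Cex, pow_two, Matrix.trace, Matrix.diag, Fin.sum_univ_four, Matrix.mul_apply,
    Matrix.vecHead, Matrix.vecTail]
  norm_num

set_option maxHeartbeats 2000000 in
lemma key (z w α s t : ℂ) (h : z * w = 1) :
    (α • (1 : Matrix (Fin 4) (Fin 4) ℂ) + s • (w • Cex + z • Cexᴴ)
        + t • (1 - Cexᴴ * Cex)).det
      = (1 / 40000) * (40000 * α ^ 4 + 126800 * α ^ 3 * t - 33200 * α ^ 2 * s ^ 2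
          + 148764 * α ^ 2 * t ^ 2 - 54672 * α * s ^ 2 * t + 76503 * α * t ^ 3
          + 3364 * s ^ 4 - 22097 * s ^ 2 * t ^ 2 + 14539 * t ^ 4) := by
  have hM : α • (1 : Matrix (Fin 4) (Fin 4) ℂ) + s • (w • Cex + z • Cexᴴ)
      + t • (1 - Cexᴴ * Cex)
      = !![α + t, s*w/2, -(s*w)/5, 0;
           s*z/2, α + 3*t/4, s*w/2 + t/10, s*w/5;
           -(s*z)/5, s*z/2 + t/10, α + 71*t/100, s*w/2 - t/10;
           0, s*z/5, s*z/2 - t/10, α + 71*t/100] := by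
    rw [CtC, CexH]
    ext i j
    fin_cases i <;> fin_cases j <;>
      simp [Cex, Matrix.vecHead, Matrix.vecTail, Matrix.one_apply] <;> ring
  rw [hM]
  simp [Matrix.det_succ_row_zero, Fin.sum_univ_succ, Matrix.vecHead, Matrix.vecTail,
    Fin.succ_zero_eq_one, Fin.succAbove]
  linear_combination ((-22097/40000 : ℂ)*s^2*t^2 + (841/10000)*s^4 + (-3417/2500)*α*s^2*t
    + (-83/100)*α^2*s^2 + (841/10000)*z*w*s^4) * h

lemma exp_mul_exp_neg (θ : ℝ) :
    Complex.exp ((θ : ℂ) * Complex.I) * Complex.exp (-(θ : ℂ) * Complex.I) = 1 := by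
  rw [← Complex.exp_add, show (θ : ℂ) * Complex.I + -(θ : ℂ) * Complex.I = 0 by ring,
    Complex.exp_zero]

lemma eval_charpoly' (M : Matrix (Fin 4) (Fin 4) ℂ) (x : ℂ) :
    M.charpoly.eval x = (x • (1 : Matrix (Fin 4) (Fin 4) ℂ) - M).det := by
  rw [Matrix.charpoly, ← Polynomial.coe_evalRingHom, RingHom.map_det]
  congr 1
  ext i j
  by_cases h : i = j <;>
    simp [h, Matrix.charmatrix_apply, Matrix.one_apply, Matrix.diagonal]

set_option maxHeartbeats 1000000 in
theorem stmt7 :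
    Matrix.trace (Cex ^ 2 * Cexᴴ * Cex ^ 2 * Cexᴴ) = 1 / 200 ∧
    ¬ (∀ θ : ℝ, ∃ U ∈ Matrix.unitaryGroup (Fin 4) ℂ,
        Uᴴ * Cex * U = Complex.exp ((θ : ℂ) * Complex.I) • Cex) ∧
    (∀ (α s t : ℂ) (θ : ℝ),
        Matrix.det (α • (1 : Matrix (Fin 4) (Fin 4) ℂ)
            + s • (Complex.exp (-(θ : ℂ) * Complex.I) • Cex
                + Complex.exp ((θ : ℂ) * Complex.I) • Cexᴴ)
            + t • (1 - Cexᴴ * Cex))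
          = (1 / 40000) * (40000 * α ^ 4 + 126800 * α ^ 3 * t - 33200 * α ^ 2 * s ^ 2
              + 148764 * α ^ 2 * t ^ 2 - 54672 * α * s ^ 2 * t + 76503 * α * t ^ 3
              + 3364 * s ^ 4 - 22097 * s ^ 2 * t ^ 2 + 14539 * t ^ 4)) ∧
    (∀ τ : ℝ, ∀ θ : ℝ,
        (Hmat Cex θ + (τ : ℂ) • (1 - Cexᴴ * Cex)).charpoly
          = (Hmat Cex 0 + (τ : ℂ) • (1 - Cexᴴ * Cex)).charpoly) := by
  refine ⟨traceW, ?_, ?_, ?_⟩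
  · -- not rotationally invariant
    intro hrot
    obtain ⟨U, hU, hEq⟩ := hrot (Real.pi / 2)
    set z : ℂ := Complex.exp (((Real.pi / 2 : ℝ) : ℂ) * Complex.I) with hzdef
    set c : ℂ := (starRingEnd ℂ) z with hcdef
    have hU1 : Uᴴ * U = 1 := by
      simpa [Matrix.star_eq_conjTranspose] using Matrix.mem_unitaryGroup_iff'.mp hU
    have hU2 : U * Uᴴ = 1 := by
      simpa [Matrix.star_eq_conjTranspose] using Matrix.mem_unitaryGroup_iff.mp hU
    have hcancel : ∀ X : Matrix (Fin 4) (Fin 4) ℂ, Uᴴ * (U * X) = X := by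
      intro X
      rw [← Matrix.mul_assoc, hU1, one_mul]
    have hC : Cex = z • (U * Cex * Uᴴ) := by
      have h2 := congrArg (fun M => U * M * Uᴴ) hEq
      rw [show U * (Uᴴ * Cex * U) * Uᴴ = (U * Uᴴ) * Cex * (U * Uᴴ) from by noncomm_ring,
        hU2, one_mul, mul_one, Matrix.mul_smul, Matrix.smul_mul] at h2
      exact h2
    have hconj : Cexᴴ = c • (U * Cexᴴ * Uᴴ) := by
      conv_lhs => rw [hC]
      simp [Matrix.conjTranspose_smul, Matrix.conjTranspose_mul, Matrix.mul_assoc, hcdef]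
    have hzc : z * c = 1 := by
      have hc : c = Complex.exp (-((Real.pi / 2 : ℝ) : ℂ) * Complex.I) := by
        rw [hcdef, hzdef, ← Complex.exp_conj]
        congr 1
        rw [RingHom.map_mul, Complex.conj_ofReal, Complex.conj_I]
        ring
      rw [hc, hzdef, ← Complex.exp_add,
        show ((Real.pi / 2 : ℝ) : ℂ) * Complex.I + -((Real.pi / 2 : ℝ) : ℂ) * Complex.I = 0
          from by ring, Complex.exp_zero]
    have hz2 : z * z = -1 := by
      rw [hzdef, ← Complex.exp_add,
        show ((Real.pi / 2 : ℝ) : ℂ) * Complex.I + ((Real.pi / 2 : ℝ) : ℂ) * Complex.I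
            = (Real.pi : ℂ) * Complex.I from by push_cast; ring,
        Complex.exp_pi_mul_I]
    have step : Cex ^ 2 * Cexᴴ * Cex ^ 2 * Cexᴴ
        = (z ^ 4 * c ^ 2) • (U * (Cex ^ 2 * Cexᴴ * Cex ^ 2 * Cexᴴ) * Uᴴ) := by
      have expand : (z ^ 4 * c ^ 2) • (U * (Cex ^ 2 * Cexᴴ * Cex ^ 2 * Cexᴴ) * Uᴴ)
          = (z • (U * Cex * Uᴴ)) ^ 2 * (c • (U * Cexᴴ * Uᴴ))
            * (z • (U * Cex * Uᴴ)) ^ 2 * (c • (U * Cexᴴ * Uᴴ)) := by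
        simp only [smul_pow, Matrix.smul_mul, Matrix.mul_smul, smul_smul]
        congr 1
        · ring
        · simp only [pow_two, Matrix.mul_assoc, hcancel]
      rw [expand, ← hC, ← hconj]
    have hW : Matrix.trace (Cex ^ 2 * Cexᴴ * Cex ^ 2 * Cexᴴ)
        = (z ^ 4 * c ^ 2) * Matrix.trace (Cex ^ 2 * Cexᴴ * Cex ^ 2 * Cexᴴ) := by
      conv_lhs => rw [step]
      rw [Matrix.trace_smul, Matrix.trace_mul_cycle, ← Matrix.mul_assoc, hU1, one_mul,
        smul_eq_mul]
    rw [traceW] at hW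
    have hfac : z ^ 4 * c ^ 2 = -1 := by
      have : z ^ 4 * c ^ 2 = (z * c) ^ 2 * (z * z) := by ring
      rw [this, hzc, hz2]
      ring
    rw [hfac] at hW
    norm_num at hW
  · -- determinant formula
    intro α s t θ
    exact key _ _ α s t (exp_mul_exp_neg θ)
  · -- charpoly independence
    intro τ θ
    apply Polynomial.funext
    intro x
    rw [eval_charpoly', eval_charpoly']
    have hsplit : ∀ φ : ℝ, x • (1 : Matrix (Fin 4) (Fin 4) ℂ)
        - (Hmat Cex φ + (τ : ℂ) • (1 - Cexᴴ * Cex))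
        = x • (1 : Matrix (Fin 4) (Fin 4) ℂ)
          + (-(1/2) : ℂ) • (Complex.exp (-(φ : ℂ) * Complex.I) • Cex
              + Complex.exp ((φ : ℂ) * Complex.I) • Cexᴴ)
          + (-(τ : ℂ)) • (1 - Cexᴴ * Cex) := by
      intro φ
      rw [Hmat]
      module
    rw [hsplit, hsplit, key _ _ x (-(1/2)) (-(τ:ℂ)) (exp_mul_exp_neg θ),
      key _ _ x (-(1/2)) (-(τ:ℂ)) (exp_mul_exp_neg 0)]
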